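/- arXiv:1411.0331 — 3 statements merged into one kernel-verified Lean document; each statement's English description precedes it below -/
import Mathlib

section
/- Let k be a commutative ring and (A,m) an associative unital k-algebra. For a k-bilinear map m₁ : A × A → A, the k[ε]-module A[ε] = A ⊕ Aε (ε² = 0) with multiplication (a+bε)(a'+b'ε) = aa' + (ab' + ba' + m₁(a,a'))ε is an associative unital k[ε]-algebra with unit 1_A (i.e. (A[ε], m+m₁ε) is a first order deformation of A) if and only if m₁ is normalized, i.e. m₁(a,1) = 0 = m₁(1,a) for all a ∈ A, and m₁ is a Hochschild 2-cocycle, i.e. a·m₁(b,c) − m₁(ab,c) + m₁(a,bc) − m₁(a,b)·c = 0 for all a,b,c ∈ A. -/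
/-!
The `A`-component of the associator of `A[ε]` vanishes by associativity of `A`, and its
`ε`-component at `x, y, z` is `-d_Hoch m₁ (x.1, y.1, z.1)`, which depends only on the `A`-components.
Likewise `(1, 0)` is a right (left) unit exactly when `m₁ a 1 = 0` (`m₁ 1 a = 0`) for all `a`.
-/

namespace Stmt1

variable {k A : Type*} [CommRing k] [Ring A] [Algebra k A]

/-- The multiplication of the first order deformation `A[ε] = A ⊕ Aε` associated to a
`k`-bilinear map `m₁`, where `(a, b)` encodes `a + bε`. -/
def defMul (m₁ : A →ₗ[k] A →ₗ[k] A) (x y : A × A) : A × A :=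
  (x.1 * y.1, x.1 * y.2 + x.2 * y.1 + m₁ x.1 y.1)

/-- The Hochschild differential `d_Hoch m₁` evaluated at `(a, b, c)`. -/
def hochschildDiff (m₁ : A →ₗ[k] A →ₗ[k] A) (a b c : A) : A :=
  a * m₁ b c - m₁ (a * b) c + m₁ a (b * c) - m₁ a b * c

section

variable (m₁ : A →ₗ[k] A →ₗ[k] A)

theorem defMul_assoc_snd_sub (x y z : A × A) :
    (defMul m₁ (defMul m₁ x y) z).2 - (defMul m₁ x (defMul m₁ y z)).2 =
      -hochschildDiff m₁ x.1 y.1 z.1 := by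
  simp only [defMul, hochschildDiff]
  noncomm_ring

theorem defMul_assoc_iff (x y z : A × A) :
    defMul m₁ (defMul m₁ x y) z = defMul m₁ x (defMul m₁ y z) ↔
      hochschildDiff m₁ x.1 y.1 z.1 = 0 := by
  rw [Prod.ext_iff, ← sub_eq_zero (a := Prod.snd _), defMul_assoc_snd_sub, neg_eq_zero]
  exact and_iff_right (mul_assoc x.1 y.1 z.1)

theorem forall_defMul_assoc_iff :
    (∀ x y z : A × A, defMul m₁ (defMul m₁ x y) z = defMul m₁ x (defMul m₁ y z)) ↔
      ∀ a b c : A, hochschildDiff m₁ a b c = 0 := by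
  simp only [defMul_assoc_iff]
  exact ⟨fun h a b c => h (a, 0) (b, 0) (c, 0), fun h x y z => h x.1 y.1 z.1⟩

theorem defMul_one_right_iff (x : A × A) : defMul m₁ x (1, 0) = x ↔ m₁ x.1 1 = 0 := by
  simp [defMul, Prod.ext_iff]

theorem defMul_one_left_iff (x : A × A) : defMul m₁ (1, 0) x = x ↔ m₁ 1 x.1 = 0 := by
  simp [defMul, Prod.ext_iff]

end

/-- `(A[ε], m + m₁ε)` is a first order deformation of `A` (i.e. the deformed multiplication is
associative and unital, with the same unit `1 = (1, 0)` as `A`) if and only if `m₁` is a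
normalized Hochschild 2-cocycle. -/
theorem first_order_deformation_iff_normalized_cocycle (m₁ : A →ₗ[k] A →ₗ[k] A) :
    ((∀ x y z : A × A, defMul m₁ (defMul m₁ x y) z = defMul m₁ x (defMul m₁ y z)) ∧
        (∀ x : A × A, defMul m₁ x (1, 0) = x ∧ defMul m₁ (1, 0) x = x)) ↔
      ((∀ a : A, m₁ a 1 = 0 ∧ m₁ 1 a = 0) ∧
        (∀ a b c : A, a * m₁ b c - m₁ (a * b) c + m₁ a (b * c) - m₁ a b * c = 0)) := by
  rw [forall_defMul_assoc_iff, and_comm]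
  simp only [defMul_one_right_iff, defMul_one_left_iff, Prod.forall, forall_const]
  rfl

end Stmt1
end

section
/- Let k be a commutative ring, U a small category and (F, f) a presheaf of k-modules on U. (1) For a family f₁ = (f₁^u)_{u:V→U} of k-linear maps f₁^u : F(U) → F(V), the data (F[ε], f + f₁ε), where F[ε](U) = F(U) ⊕ F(U)ε and restriction along u : V → U is f^u + f₁^u ε, is a presheaf of k[ε]-modules (a first order deformation of F) if and only if f₁ is reduced (f₁^{1_U} = 0 for all U) and d_simp(f₁) = 0, i.e. f₁^{uv} = f₁^v ∘ f^u + f^v ∘ f₁^u for all composable v : W → V, u : V → U. (2) For reduced 1-cocycles f₁, f₁' with deformations F̄, F̄' and a family g₁ = (g₁^U)_U of k-linear maps g₁^U : F(U) → F(U), the map g = 1 + g₁ε (with component 1 + g₁^U ε on F[ε](U)) is an isomorphism of presheaves of k[ε]-modules F̄ → F̄' if and only if d_simp(g₁) = f₁ − f₁', i.e. g₁^V ∘ f^u − f^u ∘ g₁^U = f₁^u − f₁'^u for all u : V → U. -/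
/-!
STATEMENT 8: Let `k` be a commutative ring, `U` a small category and `(F, f)` a presheaf of
`k`-modules on `U`.
(1) For a family `f₁ = (f₁^u)_{u : V → U}` of `k`-linear maps `f₁^u : F(U) → F(V)`, the data
`(F[ε], f + f₁ε)` — where `F[ε](U) = F(U) ⊕ F(U)ε` and restriction along `u : V → U` is
`f^u + f₁^u ε` — is a presheaf of `k[ε]`-modules (a first order deformation of `F`) if and only
if `f₁` is reduced (`f₁^{1_U} = 0`) and `d_simp(f₁) = 0`, i.e.
`f₁^{uv} = f₁^v ∘ f^u + f^v ∘ f₁^u` for all composable `v : W → V`, `u : V → U`.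
(2) For reduced 1-cocycles `f₁`, `f₁'` with deformations `F̄`, `F̄'` and a family
`g₁ = (g₁^U)_U` of `k`-linear maps, the map `g = 1 + g₁ε` is an isomorphism of presheaves of
`k[ε]`-modules `F̄ → F̄'` if and only if `d_simp(g₁) = f₁ − f₁'`.

`F[ε](U)` is encoded as `F(U) × F(U)` (`(x, y)` encodes `x + yε`); the `k[ε]`-module structure
is the canonical one and the maps `f^u + f₁^u ε` and `1 + g₁^U ε` are automatically
`k[ε]`-linear, so being a presheaf of `k[ε]`-modules amounts to the functoriality conditions
stated below.
-/

namespace Stmt8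

open CategoryTheory

universe w v u

variable {k : Type w} {U : Type u} [CommRing k] [Category.{v} U]

/-- A presheaf of `k`-modules on the category `U`: for `u : V ⟶ U` the restriction map is
`map u : obj U →ₗ[k] obj V`. -/
structure PreMod (k : Type w) (U : Type u) [CommRing k] [Category.{v} U] where
  obj : U → Type w
  [acgObj : ∀ X, AddCommGroup (obj X)]
  [modObj : ∀ X, Module k (obj X)]
  map : ∀ {X Y : U}, (X ⟶ Y) → (obj Y →ₗ[k] obj X)
  map_id : ∀ X : U, map (𝟙 X) = LinearMap.id
  map_comp : ∀ {X Y Z : U} (f : X ⟶ Y) (g : Y ⟶ Z), map (f ≫ g) = (map f).comp (map g)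

attribute [instance] PreMod.acgObj PreMod.modObj

variable (F : PreMod k U)

/-- The deformed restriction map `f^u + f₁^u ε : F[ε](U) → F[ε](V)`,
`(x, y) ↦ (f^u x, f₁^u x + f^u y)`. -/
def defRes (f₁ : ∀ {X Y : U}, (X ⟶ Y) → (F.obj Y →ₗ[k] F.obj X)) {X Y : U} (u : X ⟶ Y)
    (x : F.obj Y × F.obj Y) : F.obj X × F.obj X :=
  (F.map u x.1, f₁ u x.1 + F.map u x.2)

/-- The map `1 + g₁^U ε : F[ε](U) → F[ε](U)`, `(x, y) ↦ (x, g₁^U x + y)`. -/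
def defIso (g₁ : ∀ X : U, F.obj X →ₗ[k] F.obj X) (X : U) (x : F.obj X × F.obj X) :
    F.obj X × F.obj X :=
  (x.1, g₁ X x.1 + x.2)

section Lemmas

variable {F} (f₁ f₁' : ∀ {X Y : U}, (X ⟶ Y) → (F.obj Y →ₗ[k] F.obj X))

@[simp]
theorem defRes_apply {X Y : U} (u : X ⟶ Y) (x : F.obj Y × F.obj Y) :
    defRes F f₁ u x = (F.map u x.1, f₁ u x.1 + F.map u x.2) :=
  rfl

@[simp]
theorem defIso_apply (g₁ : ∀ X : U, F.obj X →ₗ[k] F.obj X) (X : U) (x : F.obj X × F.obj X) :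
    defIso F g₁ X x = (x.1, g₁ X x.1 + x.2) :=
  rfl

/- In the equivalences below the first components agree automatically, and the `ε`-components
are affine in `x.2` with the same linear part, so the condition only has to be tested on
`(x, 0)`. -/

theorem defRes_id_eq_id_iff (X : U) :
    (∀ x : F.obj X × F.obj X, defRes F f₁ (𝟙 X) x = x) ↔ f₁ (𝟙 X) = 0 := by
  constructor
  · intro h
    ext x
    simpa [F.map_id] using congrArg Prod.snd (h (x, 0))
  · intro h x
    simp [F.map_id, h]

theorem defRes_comp_eq_comp_iff {X Y Z : U} (v : X ⟶ Y) (u : Y ⟶ Z) :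
    (∀ x : F.obj Z × F.obj Z, defRes F f₁ (v ≫ u) x = defRes F f₁ v (defRes F f₁ u x)) ↔
      f₁ (v ≫ u) = (f₁ v).comp (F.map u) + (F.map v).comp (f₁ u) := by
  constructor
  · intro h
    ext x
    simpa [F.map_comp, add_comm] using congrArg Prod.snd (h (x, 0))
  · intro h x
    simp only [defRes_apply, F.map_comp, h, LinearMap.add_apply, LinearMap.comp_apply, map_add,
      Prod.mk.injEq, true_and]
    exact add_assoc _ _ _

theorem defIso_bijective (g₁ : ∀ X : U, F.obj X →ₗ[k] F.obj X) (X : U) :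
    Function.Bijective (defIso F g₁ X) :=
  Function.bijective_iff_has_inverse.mpr
    ⟨fun y => (y.1, -g₁ X y.1 + y.2), fun x => by simp, fun y => by simp⟩

theorem defIso_comp_defRes_iff (g₁ : ∀ X : U, F.obj X →ₗ[k] F.obj X) {X Y : U} (u : X ⟶ Y) :
    (∀ x : F.obj Y × F.obj Y,
        defIso F g₁ X (defRes F f₁ u x) = defRes F f₁' u (defIso F g₁ Y x)) ↔
      (F.map u).comp (g₁ Y) - (g₁ X).comp (F.map u) = f₁ u - f₁' u := by
  rw [sub_eq_sub_iff_add_eq_add, LinearMap.ext_iff]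
  simp only [LinearMap.add_apply, LinearMap.comp_apply]
  constructor
  · intro h x
    simpa [add_comm] using (congrArg Prod.snd (h (x, 0))).symm
  · intro h x
    simp only [defIso_apply, defRes_apply, map_add, Prod.mk.injEq, true_and]
    rw [← add_assoc, add_comm (g₁ X _), ← h x.1]
    abel

end Lemmas

theorem presheaf_deformations_and_equivalences :
    -- (1): `(F[ε], f + f₁ε)` is a presheaf of `k[ε]`-modules iff `f₁` is a reduced simplicial
    -- 1-cocycle:
    (∀ f₁ : ∀ {X Y : U}, (X ⟶ Y) → (F.obj Y →ₗ[k] F.obj X),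
      ((∀ (X : U) (x : F.obj X × F.obj X), defRes F f₁ (𝟙 X) x = x) ∧
        (∀ {X Y Z : U} (v : X ⟶ Y) (u : Y ⟶ Z) (x : F.obj Z × F.obj Z),
          defRes F f₁ (v ≫ u) x = defRes F f₁ v (defRes F f₁ u x))) ↔
      ((∀ X : U, f₁ (𝟙 X) = 0) ∧
        (∀ {X Y Z : U} (v : X ⟶ Y) (u : Y ⟶ Z),
          f₁ (v ≫ u) = (f₁ v).comp (F.map u) + (F.map v).comp (f₁ u)))) ∧
    -- (2): `1 + g₁ε` is an isomorphism of presheaves of `k[ε]`-modules `F̄ → F̄'` iff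
    -- `d_simp(g₁) = f₁ − f₁'`:
    (∀ (f₁ f₁' : ∀ {X Y : U}, (X ⟶ Y) → (F.obj Y →ₗ[k] F.obj X)),
      (∀ X : U, f₁ (𝟙 X) = 0) →
      (∀ {X Y Z : U} (v : X ⟶ Y) (u : Y ⟶ Z),
        f₁ (v ≫ u) = (f₁ v).comp (F.map u) + (F.map v).comp (f₁ u)) →
      (∀ X : U, f₁' (𝟙 X) = 0) →
      (∀ {X Y Z : U} (v : X ⟶ Y) (u : Y ⟶ Z),
        f₁' (v ≫ u) = (f₁' v).comp (F.map u) + (F.map v).comp (f₁' u)) →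
      ∀ g₁ : ∀ X : U, F.obj X →ₗ[k] F.obj X,
        ((∀ X : U, Function.Bijective (defIso F g₁ X)) ∧
          (∀ {X Y : U} (u : X ⟶ Y) (x : F.obj Y × F.obj Y),
            defIso F g₁ X (defRes F f₁ u x) = defRes F f₁' u (defIso F g₁ Y x))) ↔
        (∀ {X Y : U} (u : X ⟶ Y),
          (F.map u).comp (g₁ Y) - (g₁ X).comp (F.map u) = f₁ u - f₁' u)) := by
  refine ⟨fun f₁ => ?_, fun f₁ f₁' _ _ _ _ g₁ => ?_⟩
  · simp only [defRes_id_eq_id_iff, defRes_comp_eq_comp_iff]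
  · simp only [defIso_bijective, defIso_comp_defRes_iff, implies_true, true_and]

end Stmt8
end

section
/- Let k be a commutative ring, U a small category and (A, m, f) a presheaf of commutative associative unital k-algebras on U. Let ((m₁, f₁), c₁) be a normalized reduced 2-cocycle of the Gerstenhaber–Schack complex of A, decomposed according to C̄'_GS(A) = C̄'_tGS(A) ⊕ C'_simp(A), with corresponding first order twisted deformation Ā = (A[ε], m + m₁ε, f + f₁ε, 1 + c₁ε). Then Ā has central twists: each twist element c̄^{u,v} = 1 + c₁^{u,v}ε is central in the k[ε]-algebra Ā(W) = (A(W)[ε], m^W + m₁^W ε) for every composable pair v : W → V, u : V → U. Consequently Ā has an underlying presheaf of k[ε]-algebras (A[ε], m + m₁ε, f + f₁ε), which is the first order presheaf deformation corresponding to the cocycle (m₁, f₁). -/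
/-!
STATEMENT 14: Let `k` be a commutative ring, `U` a small category and `(A, m, f)` a presheaf of
commutative associative unital `k`-algebras on `U`.  Let `((m₁, f₁), c₁)` be a normalized
reduced 2-cocycle of the Gerstenhaber–Schack complex of `A` (decomposed according to
`C̄'_GS(A) = C̄'_tGS(A) ⊕ C'_simp(A)`), with corresponding first order twisted deformation
`Ā = (A[ε], m + m₁ε, f + f₁ε, 1 + c₁ε)`.  Then `Ā` has central twists: each twist element
`c̄^{u,v} = 1 + c₁^{u,v}ε` is central in the `k[ε]`-algebra `Ā(W)` for every composable pair.
Consequently `Ā` has an underlying presheaf of `k[ε]`-algebras `(A[ε], m + m₁ε, f + f₁ε)`,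
which is the first order presheaf deformation corresponding to the cocycle `(m₁, f₁)`:
each `Ā(X)` is an associative unital `k[ε]`-algebra, the deformed restriction maps are unital
algebra morphisms and they compose functorially.

Conventions are as in Statement 12.
-/

namespace Stmt14

open CategoryTheory

universe w v u

variable {k : Type w} {U : Type u} [CommRing k] [Category.{v} U]

/-- A presheaf of associative unital `k`-algebras on the category `U`. -/
structure PreAlg (k : Type w) (U : Type u) [CommRing k] [Category.{v} U] where
  obj : U → Type w
  [ringObj : ∀ X, CommRing (obj X)]
  [algObj : ∀ X, Algebra k (obj X)]
  map : ∀ {X Y : U}, (X ⟶ Y) → (obj Y →ₐ[k] obj X)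
  map_id : ∀ X : U, map (𝟙 X) = AlgHom.id k (obj X)
  map_comp : ∀ {X Y Z : U} (f : X ⟶ Y) (g : Y ⟶ Z), map (f ≫ g) = (map f).comp (map g)

attribute [instance] PreAlg.ringObj PreAlg.algObj

variable (A : PreAlg k U)

/-- The deformed multiplication `m^X + m₁^X ε` on `A(X)[ε] = A(X) × A(X)`. -/
def dMul (m₁ : ∀ X : U, A.obj X →ₗ[k] A.obj X →ₗ[k] A.obj X) (X : U)
    (x y : A.obj X × A.obj X) : A.obj X × A.obj X :=
  (x.1 * y.1, x.1 * y.2 + x.2 * y.1 + m₁ X x.1 y.1)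

/-- The deformed restriction map `f^u + f₁^u ε : A(Y)[ε] → A(X)[ε]` for `u : X ⟶ Y`. -/
def dRes (f₁ : ∀ {X Y : U}, (X ⟶ Y) → (A.obj Y →ₗ[k] A.obj X)) {X Y : U} (u : X ⟶ Y)
    (x : A.obj Y × A.obj Y) : A.obj X × A.obj X :=
  (A.map u x.1, f₁ u x.1 + A.map u x.2)

/-- The deformed twist `c̄^{u,v} = 1 + c₁^{u,v} ε ∈ A(X)[ε]` for `v : X ⟶ Y`, `u : Y ⟶ Z`. -/
def dTwist (c₁ : ∀ {X Y Z : U}, (X ⟶ Y) → (Y ⟶ Z) → A.obj X) {X Y Z : U}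
    (v : X ⟶ Y) (u : Y ⟶ Z) : A.obj X × A.obj X :=
  (1, c₁ v u)

/-! Each required identity in `A(X)[ε]` has as `ε⁰`-part an identity of the presheaf `A` and
as `ε¹`-part one of the cocycle conditions on `(m₁, f₁)`. The twist `1 + c ε` is central because
`A(X)` is commutative and `m₁` is normalized, so its multiplication is `x ↦ x + c x.1 ε` on
either side. -/

section

variable {A}

theorem dMul_one_left {m₁ : ∀ X : U, A.obj X →ₗ[k] A.obj X →ₗ[k] A.obj X} {X : U}
    (hm₁ : ∀ a : A.obj X, m₁ X 1 a = 0) (c : A.obj X) (x : A.obj X × A.obj X) :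
    dMul A m₁ X (1, c) x = (x.1, x.2 + c * x.1) := by
  simp only [dMul, hm₁]
  ext <;> ring

theorem dMul_one_right {m₁ : ∀ X : U, A.obj X →ₗ[k] A.obj X →ₗ[k] A.obj X} {X : U}
    (hm₁ : ∀ a : A.obj X, m₁ X a 1 = 0) (c : A.obj X) (x : A.obj X × A.obj X) :
    dMul A m₁ X x (1, c) = (x.1, x.2 + c * x.1) := by
  simp only [dMul, hm₁]
  ext <;> ring

theorem dMul_assoc {m₁ : ∀ X : U, A.obj X →ₗ[k] A.obj X →ₗ[k] A.obj X} {X : U}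
    (hm₁ : ∀ a b c : A.obj X,
      a * m₁ X b c - m₁ X (a * b) c + m₁ X a (b * c) - m₁ X a b * c = 0)
    (x y z : A.obj X × A.obj X) :
    dMul A m₁ X (dMul A m₁ X x y) z = dMul A m₁ X x (dMul A m₁ X y z) := by
  simp only [dMul]
  ext
  · exact mul_assoc _ _ _
  · linear_combination -hm₁ x.1 y.1 z.1

theorem dRes_dMul {m₁ : ∀ X : U, A.obj X →ₗ[k] A.obj X →ₗ[k] A.obj X}
    {f₁ : ∀ {X Y : U}, (X ⟶ Y) → (A.obj Y →ₗ[k] A.obj X)} {X Y : U} {u : X ⟶ Y}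
    (hf₁ : ∀ a b : A.obj Y, -(A.map u (m₁ Y a b) - m₁ X (A.map u a) (A.map u b))
        + (A.map u a * f₁ u b - f₁ u (a * b) + f₁ u a * A.map u b) = 0)
    (x y : A.obj Y × A.obj Y) :
    dRes A f₁ u (dMul A m₁ Y x y) = dMul A m₁ X (dRes A f₁ u x) (dRes A f₁ u y) := by
  simp only [dMul, dRes, map_add, map_mul]
  ext
  · rfl
  · linear_combination -hf₁ x.1 y.1

theorem dRes_one {f₁ : ∀ {X Y : U}, (X ⟶ Y) → (A.obj Y →ₗ[k] A.obj X)} {X Y : U}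
    {u : X ⟶ Y} (hf₁ : f₁ u 1 = 0) :
    dRes A f₁ u ((1 : A.obj Y), (0 : A.obj Y)) = (1, 0) := by
  simp [dRes, hf₁]

theorem dRes_id {f₁ : ∀ {X Y : U}, (X ⟶ Y) → (A.obj Y →ₗ[k] A.obj X)} {X : U}
    (hf₁ : f₁ (𝟙 X) = 0) (x : A.obj X × A.obj X) : dRes A f₁ (𝟙 X) x = x := by
  simp [dRes, hf₁, A.map_id]

/-- The twist enters the simplicial 2-cocycle condition only through a commutator, which
vanishes in the commutative algebra `A(X)`. -/
theorem dRes_comp {f₁ : ∀ {X Y : U}, (X ⟶ Y) → (A.obj Y →ₗ[k] A.obj X)}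
    {c₁ : ∀ {X Y Z : U}, (X ⟶ Y) → (Y ⟶ Z) → A.obj X} {X Y Z : U} {v : X ⟶ Y} {u : Y ⟶ Z}
    (hf₁ : ∀ a : A.obj Z, -(A.map v (f₁ u a) - f₁ (v ≫ u) a + f₁ v (A.map u a))
        + (A.map v (A.map u a) * c₁ v u - c₁ v u * A.map v (A.map u a)) = 0)
    (x : A.obj Z × A.obj Z) : dRes A f₁ (v ≫ u) x = dRes A f₁ v (dRes A f₁ u x) := by
  simp only [dRes, A.map_comp, AlgHom.comp_apply, map_add]
  ext
  · rfl
  · linear_combination hf₁ x.1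

end

theorem central_twists_and_underlying_presheaf
    (m₁ : ∀ X : U, A.obj X →ₗ[k] A.obj X →ₗ[k] A.obj X)
    (f₁ : ∀ {X Y : U}, (X ⟶ Y) → (A.obj Y →ₗ[k] A.obj X))
    (c₁ : ∀ {X Y Z : U}, (X ⟶ Y) → (Y ⟶ Z) → A.obj X)
    -- `((m₁, f₁), c₁)` is a normalized reduced GS 2-cocycle:
    (hnorm_m : ∀ (X : U) (a : A.obj X), m₁ X a 1 = 0 ∧ m₁ X 1 a = 0)
    (hnorm_f : ∀ {X Y : U} (u : X ⟶ Y), f₁ u 1 = 0)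
    (hred_f : ∀ X : U, f₁ (𝟙 X) = 0)
    (hHoch_m : ∀ (X : U) (a b c : A.obj X),
      a * m₁ X b c - m₁ X (a * b) c + m₁ X a (b * c) - m₁ X a b * c = 0)
    (h11 : ∀ {X Y : U} (u : X ⟶ Y) (a b : A.obj Y),
      -(A.map u (m₁ Y a b) - m₁ X (A.map u a) (A.map u b))
        + (A.map u a * f₁ u b - f₁ u (a * b) + f₁ u a * A.map u b) = 0)
    (h21 : ∀ {X Y Z : U} (v : X ⟶ Y) (u : Y ⟶ Z) (a : A.obj Z),
      -(A.map v (f₁ u a) - f₁ (v ≫ u) a + f₁ v (A.map u a))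
        + (A.map v (A.map u a) * c₁ v u - c₁ v u * A.map v (A.map u a)) = 0) :
    -- `Ā` has central twists:
    (∀ {X Y Z : U} (v : X ⟶ Y) (u : Y ⟶ Z) (x : A.obj X × A.obj X),
      dMul A m₁ X (dTwist A c₁ v u) x = dMul A m₁ X x (dTwist A c₁ v u)) ∧
    -- the underlying data `(A[ε], m + m₁ε, f + f₁ε)` is a first order presheaf deformation
    -- of `A`, corresponding to the cocycle `(m₁, f₁)`:
    ((∀ (X : U) (x y z : A.obj X × A.obj X),
        dMul A m₁ X (dMul A m₁ X x y) z = dMul A m₁ X x (dMul A m₁ X y z)) ∧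
      (∀ (X : U) (x : A.obj X × A.obj X),
        dMul A m₁ X x (1, 0) = x ∧ dMul A m₁ X (1, 0) x = x) ∧
      (∀ {X Y : U} (u : X ⟶ Y) (x y : A.obj Y × A.obj Y),
        dRes A f₁ u (dMul A m₁ Y x y) = dMul A m₁ X (dRes A f₁ u x) (dRes A f₁ u y)) ∧
      (∀ {X Y : U} (u : X ⟶ Y), dRes A f₁ u ((1 : A.obj Y), (0 : A.obj Y)) = (1, 0)) ∧
      (∀ (X : U) (x : A.obj X × A.obj X), dRes A f₁ (𝟙 X) x = x) ∧
      (∀ {X Y Z : U} (v : X ⟶ Y) (u : Y ⟶ Z) (x : A.obj Z × A.obj Z),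
        dRes A f₁ (v ≫ u) x = dRes A f₁ v (dRes A f₁ u x))) :=
  ⟨fun v u x => by
      rw [dTwist, dMul_one_left (fun a => (hnorm_m _ a).2),
        dMul_one_right (fun a => (hnorm_m _ a).1)],
    fun X => dMul_assoc (hHoch_m X),
    fun X x => ⟨by simpa using dMul_one_right (fun a => (hnorm_m X a).1) 0 x,
      by simpa using dMul_one_left (fun a => (hnorm_m X a).2) 0 x⟩,
    fun u => dRes_dMul (h11 u),
    fun u => dRes_one (hnorm_f u),
    fun X => dRes_id (hred_f X),
    fun v u => dRes_comp (h21 v u)⟩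

end Stmt14
end
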